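/- Let S ⊆ Z^n be an integrally convex set admitting a dec-min element. Then for any two dec-min elements x, y of S, the L∞-distance satisfies ‖x − y‖_∞ ≤ 1. -/

import Mathlib

open Finset

/-- Descending rearrangement of a tuple. -/
noncomputable def sortDesc {n : ℕ} {α : Type*} [LinearOrder α] (x : Fin n → α) : Fin n → α :=
  x ∘ (Tuple.sort (fun i => OrderDual.toDual (x i)))

/-- `x <_dec y` : strict lexicographic comparison of descending rearrangements. -/
noncomputable def decLT {n : ℕ} {α : Type*} [LinearOrder α] (x y : Fin n → α) : Prop :=
  ∃ i : Fin n, (∀ j : Fin n, j < i → sortDesc x j = sortDesc y j) ∧ sortDesc x i < sortDesc y i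

/-- `x ≤_dec y` : lexicographic comparison of descending rearrangements. -/
noncomputable def decLE {n : ℕ} {α : Type*} [LinearOrder α] (x y : Fin n → α) : Prop :=
  sortDesc x = sortDesc y ∨ decLT x y

/-- `x` is a decreasingly minimal (dec-min) element of `S`. -/
noncomputable def DecMin {n : ℕ} (S : Set (Fin n → ℤ)) (x : Fin n → ℤ) : Prop :=
  x ∈ S ∧ ∀ y ∈ S, decLE x y

/-- Embedding of integer vectors into real vectors. -/
def castVec {n : ℕ} (z : Fin n → ℤ) : Fin n → ℝ := fun i => (z i : ℝ)

/-- `S ⊆ ℤⁿ` is an integrally convex set: every point of `conv S` lies in the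
convex hull of the points of `S` in its integral neighborhood. -/
def IntConvexSet {n : ℕ} (S : Set (Fin n → ℤ)) : Prop :=
  S.Nonempty ∧ ∀ x : Fin n → ℝ,
    x ∈ convexHull ℝ (castVec '' S) →
    x ∈ convexHull ℝ (castVec '' {z ∈ S | ∀ i, |x i - (z i : ℝ)| < 1})

/-!
With `c = n + 1`, the potential `Φ z = ∑ i, c ^ z i` is monotone for `≤_dec`: where two sorted vectors
first differ, the larger entry exceeds each of the at most `n` later entries of the other vector,
and `c > n` makes it outweigh them all. So all dec-min points of `S` share the least value of `Φ` on `S`. If `|x j - y j| ≥ 2`, integral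
convexity writes the midpoint of `x` and `y` as a convex combination of points of `S` lying in
its integral neighborhood; in each coordinate these take only the two integers around the
midpoint, where the weighted average of `c ^ ·` is a secant value. By convexity of `c ^ ·` it is
at most the average of `c ^ x i` and `c ^ y i`, strictly so in coordinate `j`, so one of those
points has a smaller potential than `x`.
-/

section DecOrder

variable {n : ℕ} {α : Type*} [LinearOrder α]

lemma sortDesc_antitone (x : Fin n → α) : Antitone (sortDesc x) :=
  fun _ _ h => Tuple.monotone_sort (fun i => OrderDual.toDual (x i)) h

lemma sum_comp_sortDesc {M : Type*} [AddCommMonoid M] (f : α → M) (x : Fin n → α) :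
    ∑ i, f (sortDesc x i) = ∑ i, f (x i) :=
  Equiv.sum_comp (Tuple.sort fun i => OrderDual.toDual (x i)) (fun i => f (x i))

lemma decLT_asymm {x y : Fin n → α} (hxy : decLT x y) : ¬ decLT y x := by
  rintro ⟨j, hj_eq, hj_lt⟩
  obtain ⟨i, hi_eq, hi_lt⟩ := hxy
  rcases lt_trichotomy i j with h | rfl | h
  · exact (hj_eq i h).symm.not_lt hi_lt
  · exact hi_lt.not_gt hj_lt
  · exact (hi_eq j h).symm.not_lt hj_lt

lemma decLE.sortDesc_eq {x y : Fin n → α} (hxy : decLE x y) (hyx : decLE y x) :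
    sortDesc x = sortDesc y := by
  rcases hxy with h | hxy
  · exact h
  rcases hyx with h | hyx
  · exact h.symm
  · exact absurd hyx (decLT_asymm hxy)

end DecOrder

lemma sum_zpow_le_of_decLE {n : ℕ} {c : ℝ} (hc : n < c) {x z : Fin n → ℤ} (h : decLE x z) :
    ∑ i, c ^ x i ≤ ∑ i, c ^ z i := by
  classical
  rw [← sum_comp_sortDesc (c ^ ·) x, ← sum_comp_sortDesc (c ^ ·) z]
  rcases h with heq | ⟨k, hpre, hk⟩
  · rw [heq]
  have hanti := sortDesc_antitone x
  set u := sortDesc x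
  set v := sortDesc z
  have hc1 : 1 < c := lt_of_le_of_lt (by exact_mod_cast k.pos) hc
  have hc0 : 0 < c := one_pos.trans hc1
  rw [← sum_filter_add_sum_filter_not univ (· < k) (fun i => c ^ u i),
    ← sum_filter_add_sum_filter_not univ (· < k) (fun i => c ^ v i),
    sum_congr rfl fun i hi => by rw [hpre i (mem_filter.mp hi).2]]
  refine add_le_add le_rfl ?_
  have htail : ∀ i ∈ univ.filter (¬ · < k), c ^ u i ≤ c ^ (v k - 1) := fun i hi =>
    zpow_le_zpow_right₀ hc1.le <| by
      have := hanti (not_lt.mp (mem_filter.mp hi).2); omega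
  calc ∑ i ∈ univ.filter (¬ · < k), c ^ u i
      ≤ ∑ i ∈ univ.filter (¬ · < k), c ^ (v k - 1) := sum_le_sum htail
    _ ≤ ∑ i : Fin n, c ^ (v k - 1) :=
        sum_le_sum_of_subset_of_nonneg (filter_subset _ _) fun _ _ _ => (zpow_pos hc0 _).le
    _ = n * c ^ (v k - 1) := by simp
    _ ≤ c * c ^ (v k - 1) := by gcongr
    _ = c ^ v k := by rw [← zpow_one_add₀ hc0.ne']; ring_nf
    _ ≤ ∑ i ∈ univ.filter (¬ · < k), c ^ v i :=
        single_le_sum (f := fun i => c ^ v i) (fun _ _ => (zpow_pos hc0 _).le) (by simp)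

section Secant

variable {c : ℝ}

lemma one_add_mul_lt_zpow (hc : 2 ≤ c) {k : ℤ} (h0 : k ≠ 0) (h1 : k ≠ 1) :
    1 + k * (c - 1) < c ^ k := by
  rcases lt_or_gt_of_ne h0 with hk | hk
  · have hk' : (k : ℝ) ≤ -1 := by exact_mod_cast Int.le_sub_one_of_lt hk
    nlinarith [zpow_pos (by linarith : 0 < c) k]
  · have hk' : (1 : ℝ) < k := by exact_mod_cast lt_of_le_of_ne hk (Ne.symm h1)
    have := one_add_mul_self_lt_rpow_one_add (by linarith : -1 ≤ c - 1) (by linarith) hk'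
    rwa [add_sub_cancel, Real.rpow_intCast] at this

lemma one_add_mul_le_zpow (hc : 2 ≤ c) (k : ℤ) : 1 + k * (c - 1) ≤ c ^ k := by
  by_cases h0 : k = 0
  · simp [h0]
  by_cases h1 : k = 1
  · simp [h1]
  exact (one_add_mul_lt_zpow hc h0 h1).le

lemma zpow_secant_eq (hc : 0 < c) (a s : ℤ) :
    c ^ a + (s - a) * (c ^ (a + 1) - c ^ a) = c ^ a * (1 + ((s - a : ℤ) : ℝ) * (c - 1)) := by
  rw [zpow_add_one₀ hc.ne']; push_cast; ring

lemma zpow_eq_mul_zpow_sub (hc : 0 < c) (a s : ℤ) : c ^ s = c ^ a * c ^ (s - a) := by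
  rw [← zpow_add₀ hc.ne', add_sub_cancel]

lemma zpow_secant_le (hc : 2 ≤ c) (a s : ℤ) :
    c ^ a + (s - a) * (c ^ (a + 1) - c ^ a) ≤ c ^ s := by
  have hc0 : 0 < c := by linarith
  rw [zpow_secant_eq hc0, zpow_eq_mul_zpow_sub hc0 a s]
  exact mul_le_mul_of_nonneg_left (one_add_mul_le_zpow hc _) (zpow_pos hc0 a).le

lemma zpow_secant_lt (hc : 2 ≤ c) {a s : ℤ} (h0 : s ≠ a) (h1 : s ≠ a + 1) :
    c ^ a + (s - a) * (c ^ (a + 1) - c ^ a) < c ^ s := by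
  have hc0 : 0 < c := by linarith
  rw [zpow_secant_eq hc0, zpow_eq_mul_zpow_sub hc0 a s]
  exact mul_lt_mul_of_pos_left (one_add_mul_lt_zpow hc (by omega) (by omega)) (zpow_pos hc0 a)

end Secant

lemma sum_mul_eq_secant {ι : Type*} (F : ℤ → ℝ) {t : Finset ι} {w : ι → ℝ} {ζ : ι → ℤ} {a : ℤ}
    (hw : ∑ k ∈ t, w k = 1) (hζ : ∀ k ∈ t, ζ k = a ∨ ζ k = a + 1) :
    ∑ k ∈ t, w k * F (ζ k) = F a + (∑ k ∈ t, w k * ζ k - a) * (F (a + 1) - F a) := by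
  have hterm : ∀ k ∈ t, w k * F (ζ k) = w k * F a + (w k * ζ k - w k * a) * (F (a + 1) - F a) := by
    intro k hk
    rcases hζ k hk with h | h <;> rw [h] <;> push_cast <;> ring
  rw [sum_congr rfl hterm, sum_add_distrib, ← sum_mul, ← sum_mul, sum_sub_distrib, ← sum_mul, hw]
  ring

lemma eq_or_eq_add_one_of_abs_midpoint_sub_lt {X Y z : ℤ} (h : |((X : ℝ) + Y) / 2 - z| < 1) :
    z = (X + Y) / 2 ∨ z = (X + Y) / 2 + 1 := by
  have h2 : |((X + Y - 2 * z : ℤ) : ℝ)| < 2 := by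
    push_cast
    rw [show (X : ℝ) + Y - 2 * z = 2 * ((X + Y) / 2 - z) by ring, abs_mul, abs_two]
    linarith
  have h2' : |X + Y - 2 * z| < 2 := by exact_mod_cast h2
  rw [abs_lt] at h2'
  omega

section NearMidpoint

variable {ι : Type*} {c : ℝ} {X Y : ℤ} {t : Finset ι} {w : ι → ℝ} {ζ : ι → ℤ}

lemma sum_mul_zpow_le_of_near_midpoint (hc : 2 ≤ c) (hw : ∑ k ∈ t, w k = 1)
    (hζ : ∀ k ∈ t, |((X : ℝ) + Y) / 2 - ζ k| < 1) (hm : ∑ k ∈ t, w k * ζ k = ((X : ℝ) + Y) / 2) :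
    ∑ k ∈ t, w k * c ^ ζ k ≤ (c ^ X + c ^ Y) / 2 := by
  rw [sum_mul_eq_secant (c ^ ·) hw fun k hk => eq_or_eq_add_one_of_abs_midpoint_sub_lt (hζ k hk),
    hm]
  linarith [zpow_secant_le hc ((X + Y) / 2) X, zpow_secant_le hc ((X + Y) / 2) Y]

lemma sum_mul_zpow_lt_of_near_midpoint (hc : 2 ≤ c) (hXY : 1 < |X - Y|)
    (hw : ∑ k ∈ t, w k = 1)
    (hζ : ∀ k ∈ t, |((X : ℝ) + Y) / 2 - ζ k| < 1) (hm : ∑ k ∈ t, w k * ζ k = ((X : ℝ) + Y) / 2) :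
    ∑ k ∈ t, w k * c ^ ζ k < (c ^ X + c ^ Y) / 2 := by
  rw [sum_mul_eq_secant (c ^ ·) hw fun k hk => eq_or_eq_add_one_of_abs_midpoint_sub_lt (hζ k hk),
    hm]
  rw [lt_abs] at hXY
  rcases (by omega : (X ≠ (X + Y) / 2 ∧ X ≠ (X + Y) / 2 + 1) ∨
      (Y ≠ (X + Y) / 2 ∧ Y ≠ (X + Y) / 2 + 1)) with ⟨hX0, hX1⟩ | ⟨hY0, hY1⟩
  · linarith [zpow_secant_lt hc hX0 hX1, zpow_secant_le hc ((X + Y) / 2) Y]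
  · linarith [zpow_secant_le hc ((X + Y) / 2) X, zpow_secant_lt hc hY0 hY1]

end NearMidpoint

lemma IntConvexSet.exists_near_midpoint {n : ℕ} {S : Set (Fin n → ℤ)} (hS : IntConvexSet S)
    {x y : Fin n → ℤ} (hx : x ∈ S) (hy : y ∈ S) :
    ∃ (ι : Type) (t : Finset ι) (w : ι → ℝ) (ζ : ι → Fin n → ℤ),
      (∀ k ∈ t, 0 ≤ w k) ∧ ∑ k ∈ t, w k = 1 ∧
      (∀ k ∈ t, ζ k ∈ S ∧ ∀ i, |((x i : ℝ) + y i) / 2 - ζ k i| < 1) ∧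
      ∀ i, ∑ k ∈ t, w k * ζ k i = ((x i : ℝ) + y i) / 2 := by
  set m : Fin n → ℝ := fun i => ((x i : ℝ) + y i) / 2
  have hm : m ∈ convexHull ℝ (castVec '' S) := by
    convert convex_convexHull ℝ (castVec '' S) (subset_convexHull ℝ _ ⟨x, hx, rfl⟩)
      (subset_convexHull ℝ _ ⟨y, hy, rfl⟩) (by norm_num : (0 : ℝ) ≤ 1 / 2)
      (by norm_num : (0 : ℝ) ≤ 1 / 2) (by norm_num) using 1
    funext i
    simp only [m, castVec, Pi.add_apply, Pi.smul_apply, smul_eq_mul]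
    ring
  obtain ⟨ι, t, w, p, hw0, hw1, hp, hcm⟩ := (_root_.convexHull_eq _).subset (hS.2 m hm)
  choose! ζ hζ hζp using hp
  refine ⟨ι, t, w, ζ, hw0, hw1, hζ, fun i => ?_⟩
  rw [centerMass_eq_of_sum_1 _ _ hw1] at hcm
  change _ = m i
  rw [← hcm, Finset.sum_apply]
  exact sum_congr rfl fun k hk => by simp [← hζp k hk, castVec]

theorem decmin_linf_diameter_le_one_general (n : ℕ) (S : Set (Fin n → ℤ))
    (hS : IntConvexSet S)
    (x y : Fin n → ℤ) (hx : DecMin S x) (hy : DecMin S y) :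
    ∀ i, |x i - y i| ≤ 1 := by
  by_contra! ⟨j, hj⟩
  set c : ℝ := n + 1
  have hc : 2 ≤ c := by
    have : (1 : ℝ) ≤ n := by exact_mod_cast j.pos
    linarith
  obtain ⟨ι, t, w, ζ, hw0, hw1, hζ, hζm⟩ := hS.exists_near_midpoint hx.1 hy.1
  have hxy : ∑ i, c ^ x i = ∑ i, c ^ y i := by
    rw [← sum_comp_sortDesc (c ^ ·) x, ← sum_comp_sortDesc (c ^ ·) y,
      (hx.2 y hy.1).sortDesc_eq (hy.2 x hx.1)]
  have hle : ∑ i, c ^ x i ≤ ∑ k ∈ t, w k * ∑ i, c ^ ζ k i := calc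
    ∑ i, c ^ x i = ∑ k ∈ t, w k * ∑ i, c ^ x i := by rw [← sum_mul, hw1, one_mul]
    _ ≤ ∑ k ∈ t, w k * ∑ i, c ^ ζ k i := sum_le_sum fun k hk =>
      mul_le_mul_of_nonneg_left (sum_zpow_le_of_decLE (by simp [c]) (hx.2 _ (hζ k hk).1))
        (hw0 k hk)
  have hlt : ∑ k ∈ t, w k * ∑ i, c ^ ζ k i < ∑ i, c ^ x i := calc
    ∑ k ∈ t, w k * ∑ i, c ^ ζ k i = ∑ i, ∑ k ∈ t, w k * c ^ ζ k i := by
      simp_rw [mul_sum]; exact sum_comm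
    _ < ∑ i, (c ^ x i + c ^ y i) / 2 :=
      sum_lt_sum (fun i _ => sum_mul_zpow_le_of_near_midpoint hc hw1
          (fun k hk => (hζ k hk).2 i) (hζm i))
        ⟨j, mem_univ j, sum_mul_zpow_lt_of_near_midpoint hc hj hw1
          (fun k hk => (hζ k hk).2 j) (hζm j)⟩
    _ = ∑ i, c ^ x i := by rw [← sum_div, sum_add_distrib, ← hxy]; ring
  exact hlt.not_ge hle

theorem decmin_linf_diameter_le_one (n : ℕ) (S : Set (Fin n → ℤ))
    (hS : IntConvexSet S) (hdm : ∃ w, DecMin S w)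
    (x y : Fin n → ℤ) (hx : DecMin S x) (hy : DecMin S y) :
    ∀ i, |x i - y i| ≤ 1 :=
  decmin_linf_diameter_le_one_general n S hS x y hx hy
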